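/- For eigenvalues λ₁,...,λ_d of a matrix all having nonzero real part of the same sign, the elementary symmetric polynomials satisfy: for each m with 1 ≤ m ≤ d-1, (m+1)·|σ_{m+1}(λ)| ≥ (d-m)·c₀·|σ_m(λ)|, where σ_m is the m-th elementary symmetric polynomial and c₀ = min_j |Re(λ_j)|. Moreover |σ₁(λ)| ≥ d·c₀. -/

import Mathlib

/-!
Put `P = ∏ (X + zᵢ)`, a polynomial of degree `n`. Its Euler defect `n P - (X + c) P'` satisfies a
Leibniz rule, so the property "`P` and its defect have nonnegative coefficients" is stable under
products. After replacing every `zᵢ` by `-zᵢ` if necessary, all real parts are `≥ max 0 c`, and a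
conjugation-closed multiset splits into real points `a` and conjugate pairs `a, ā`. For the factor
`X + a` the defect is `a - c`; for `(X + a)(X + ā)` it is `2 (re a - c) X + 2 (|a|² - c re a)`.
Nonnegativity is taken in the partial order `ComplexOrder`, which also makes every `e_m` real and
hence equal to its norm.
-/

open Finset Polynomial ComplexConjugate
open scoped ComplexOrder

namespace Polynomial

variable {R : Type*} [CommRing R]

/-- For `p = ∏ (X + zᵢ)` of degree `n`, the coefficient of `X ^ (n - 1 - m)` in this polynomial is
`(m + 1) e_{m+1} - (n - m) c e_m` (see `coeff_eulerDefect`), so the growth inequality for the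
elementary symmetric functions `e_m` of the `zᵢ` is nonnegativity of its coefficients. -/
noncomputable def eulerDefect (c : R) (n : ℕ) (p : R[X]) : R[X] :=
  (n : R[X]) * p - (X + C c) * derivative p

theorem eulerDefect_mul (c : R) (n₁ n₂ : ℕ) (p q : R[X]) :
    eulerDefect c (n₁ + n₂) (p * q) = eulerDefect c n₁ p * q + p * eulerDefect c n₂ q := by
  simp only [eulerDefect, derivative_mul, Nat.cast_add]
  ring

theorem coeff_X_mul_derivative (p : R[X]) (j : ℕ) :
    (X * derivative p).coeff j = j * p.coeff j := by
  cases j <;> simp [coeff_derivative, mul_comm]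

theorem coeff_eulerDefect (c : R) (n : ℕ) (p : R[X]) (j : ℕ) :
    (eulerDefect c n p).coeff j = (n - j) * p.coeff j - c * (j + 1) * p.coeff (j + 1) := by
  rw [eulerDefect, add_mul, coeff_sub, coeff_add, coeff_X_mul_derivative, coeff_natCast_mul,
    coeff_C_mul, coeff_derivative]
  ring

variable [PartialOrder R]

def CoeffNonneg (p : R[X]) : Prop := ∀ k, 0 ≤ p.coeff k

def IsGrowthBounded (c : R) (n : ℕ) (p : R[X]) : Prop :=
  CoeffNonneg p ∧ CoeffNonneg (eulerDefect c n p)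

variable [IsOrderedRing R]

theorem CoeffNonneg.add {p q : R[X]} (hp : CoeffNonneg p) (hq : CoeffNonneg q) :
    CoeffNonneg (p + q) :=
  fun k => by simpa only [coeff_add] using add_nonneg (hp k) (hq k)

theorem CoeffNonneg.mul {p q : R[X]} (hp : CoeffNonneg p) (hq : CoeffNonneg q) :
    CoeffNonneg (p * q) := fun k => by
  rw [coeff_mul]
  exact sum_nonneg fun x _ => mul_nonneg (hp _) (hq _)

theorem IsGrowthBounded.mul {c : R} {n₁ n₂ : ℕ} {p q : R[X]} (hp : IsGrowthBounded c n₁ p)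
    (hq : IsGrowthBounded c n₂ q) :
    IsGrowthBounded c (n₁ + n₂) (p * q) := by
  refine ⟨hp.1.mul hq.1, ?_⟩
  rw [eulerDefect_mul]
  exact (hp.2.mul hq.1).add (hp.1.mul hq.2)

theorem isGrowthBounded_one {c : R} : IsGrowthBounded c 0 1 := by
  refine ⟨fun k => ?_, fun k => by simp [eulerDefect]⟩
  rw [coeff_one]
  split_ifs <;> simp

theorem isGrowthBounded_X_add_C {c a : R} (ha : 0 ≤ a) (hca : c ≤ a) :
    IsGrowthBounded c 1 (X + C a) := by
  refine ⟨fun k => ?_, fun k => ?_⟩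
  · rcases k with _ | _ | k <;> simp [coeff_X, coeff_C, ha]
  · rw [coeff_eulerDefect]
    rcases k with _ | _ | k <;> simp [coeff_X, coeff_C, hca]

theorem isGrowthBounded_X_add_C_mul_X_add_C {c a b : R} (h₁ : 0 ≤ a + b) (h₂ : 0 ≤ a * b)
    (h₃ : 2 * c ≤ a + b) (h₄ : c * (a + b) ≤ 2 * (a * b)) :
    IsGrowthBounded c 2 ((X + C a) * (X + C b)) := by
  have hprod : (X + C a) * (X + C b) = X ^ 2 + C (a + b) * X + C (a * b) := by
    simp only [C_add, C_mul]; ring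
  rw [hprod]
  refine ⟨fun k => ?_, fun k => ?_⟩
  · rcases k with _ | _ | _ | k <;> simp [coeff_X, coeff_C, coeff_X_pow, h₁, h₂]
  · rw [coeff_eulerDefect]
    rcases k with _ | _ | _ | k
    · simpa [coeff_X, coeff_C, coeff_X_pow] using h₄
    · norm_num [coeff_X, coeff_C, coeff_X_pow]
      simpa [mul_comm] using h₃
    all_goals simp [coeff_X_pow]

end Polynomial

namespace Multiset

@[elab_as_elim]
theorem induction_on_map_involutive {α : Type*} [DecidableEq α] {f : α → α}
    (hf : Function.Involutive f) {p : Multiset α → Prop} (zero : p 0)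
    (fixed : ∀ a s, f a = a → p s → p (a ::ₘ s)) (pair : ∀ a s, p s → p (a ::ₘ f a ::ₘ s))
    (s : Multiset α) (hs : s.map f = s) : p s := by
  induction s using Multiset.strongInductionOn with
  | ih s ih =>
  rcases Multiset.empty_or_exists_mem s with rfl | ⟨a, ha⟩
  · exact zero
  have hmap_erase : ∀ t : Multiset α, ∀ b, (t.erase b).map f = (t.map f).erase (f b) :=
    fun t b => map_erase f hf.injective b t
  by_cases hfa : f a = a
  · rw [← cons_erase ha]
    refine fixed a _ hfa (ih _ (erase_lt.2 ha) ?_)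
    rw [hmap_erase, hs, hfa]
  · have hfa_mem : f a ∈ s.erase a := (mem_erase_of_ne hfa).2 (hs ▸ mem_map_of_mem f ha)
    rw [← cons_erase ha, ← cons_erase hfa_mem]
    refine pair a _ (ih _ ((erase_le _ _).trans_lt (erase_lt.2 ha)) ?_)
    rw [hmap_erase, hmap_erase, hs, hf a, erase_comm]

section OrderedRing

variable {R : Type*} [CommRing R] [PartialOrder R] {c : R} {s : Multiset R}

theorem esymm_nonneg_of_isGrowthBounded
    (h : IsGrowthBounded c (card s) (s.map fun r => X + C r).prod) {k : ℕ} (hk : k ≤ card s) :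
    0 ≤ s.esymm k := by
  have := h.1 (card s - k)
  rwa [prod_X_add_C_coeff _ (Nat.sub_le _ _), Nat.sub_sub_self hk] at this

theorem card_sub_mul_esymm_le_of_isGrowthBounded [IsOrderedRing R]
    (h : IsGrowthBounded c (card s) (s.map fun r => X + C r).prod) {m : ℕ} (hm : m < card s) :
    ((card s - m : ℕ) : R) * c * s.esymm m ≤ ((m + 1 : ℕ) : R) * s.esymm (m + 1) := by
  obtain ⟨j, hj⟩ : ∃ j, card s = j + (m + 1) := ⟨card s - (m + 1), by omega⟩
  have := h.2 j
  rw [coeff_eulerDefect, prod_X_add_C_coeff _ (by omega), prod_X_add_C_coeff _ (by omega), hj,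
    show j + (m + 1) - j = m + 1 by omega, show j + (m + 1) - (j + 1) = m by omega] at this
  rw [hj, show j + (m + 1) - m = j + 1 by omega]
  refine sub_nonneg.1 (this.trans_eq ?_)
  push_cast
  ring

end OrderedRing

theorem isGrowthBounded_prod_X_add_C {c : ℝ} {s : Multiset ℂ} (hs : s.map conj = s)
    (hre : ∀ z ∈ s, 0 ≤ z.re ∧ c ≤ z.re) :
    IsGrowthBounded (c : ℂ) (card s) (s.map fun z => X + C z).prod := by
  revert hre
  refine induction_on_map_involutive Complex.conj_conj ?_ ?_ ?_ s hs
  · exact fun _ => isGrowthBounded_one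
  · intro a s ha ih hre
    have him : a.im = 0 := Complex.conj_eq_iff_im.1 ha
    obtain ⟨h0, hc⟩ := hre a (mem_cons_self a s)
    rw [map_cons, prod_cons, card_cons, add_comm]
    refine (isGrowthBounded_X_add_C ?_ ?_).mul (ih fun z hz => hre z (mem_cons_of_mem hz))
    · exact Complex.nonneg_iff.2 ⟨h0, him.symm⟩
    · exact Complex.le_def.2 ⟨hc, by simp [him]⟩
  · intro a s ih hre
    obtain ⟨h0, hc⟩ := hre a (mem_cons_self a _)
    rw [map_cons, map_cons, prod_cons, prod_cons, ← mul_assoc, card_cons, card_cons,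
      show card s + 1 + 1 = 2 + card s by ring]
    refine .mul ?_ (ih fun z hz => hre z (mem_cons_of_mem (mem_cons_of_mem hz)))
    have hsum : a + conj a = ((2 * a.re : ℝ) : ℂ) := Complex.add_conj a
    have hmul : a * conj a = ((Complex.normSq a : ℝ) : ℂ) := Complex.mul_conj a
    apply isGrowthBounded_X_add_C_mul_X_add_C <;> simp only [hsum, hmul]
    · exact_mod_cast (show (0 : ℝ) ≤ 2 * a.re by linarith)
    · exact_mod_cast Complex.normSq_nonneg a
    · exact_mod_cast (show 2 * c ≤ 2 * a.re by linarith)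
    · rw [Complex.normSq_apply]
      exact_mod_cast (show c * (2 * a.re) ≤ 2 * (a.re * a.re + a.im * a.im) by nlinarith)

theorem card_sub_mul_norm_esymm_le {c : ℝ} {s : Multiset ℂ} (hs : s.map conj = s)
    (hre : ∀ z ∈ s, 0 ≤ z.re ∧ c ≤ z.re) {m : ℕ} (hm : m < card s) :
    ((card s : ℝ) - m) * c * ‖s.esymm m‖ ≤ (m + 1) * ‖s.esymm (m + 1)‖ := by
  have h := isGrowthBounded_prod_X_add_C hs hre
  have hnorm : ∀ k ≤ card s, ‖s.esymm k‖ = (s.esymm k).re := fun k hk =>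
    (Complex.re_eq_norm.2 (esymm_nonneg_of_isGrowthBounded h hk)).symm
  rw [hnorm m hm.le, hnorm (m + 1) hm]
  have := (Complex.le_def.1 (card_sub_mul_esymm_le_of_isGrowthBounded h hm)).1
  simpa [Nat.cast_sub hm.le] using this

theorem card_sub_mul_norm_esymm_le_of_re_sign {c : ℝ} {s : Multiset ℂ} (hs : s.map conj = s)
    (hsign : (∀ z ∈ s, 0 ≤ z.re) ∨ (∀ z ∈ s, z.re ≤ 0)) (hc : ∀ z ∈ s, c ≤ |z.re|) {m : ℕ}
    (hm : m < card s) :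
    ((card s : ℝ) - m) * c * ‖s.esymm m‖ ≤ (m + 1) * ‖s.esymm (m + 1)‖ := by
  rcases hsign with hpos | hneg
  · refine card_sub_mul_norm_esymm_le hs (fun z hz => ⟨hpos z hz, ?_⟩) hm
    simpa [abs_of_nonneg (hpos z hz)] using hc z hz
  · have hs' : (s.map Neg.neg).map conj = s.map Neg.neg := by
      conv_rhs => rw [← hs]
      simp only [map_map, Function.comp_def, map_neg]
    have := card_sub_mul_norm_esymm_le hs' (c := c) ?_ (m := m) (by simpa using hm)
    · simpa [esymm_neg] using this
    · simp only [mem_map, forall_exists_index, and_imp]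
      rintro _ z hz rfl
      rw [Complex.neg_re, ← abs_of_nonpos (hneg z hz)]
      exact ⟨abs_nonneg _, hc z hz⟩

end Multiset

/-- For a conjugation-closed family `λ₁,…,λ_d` of complex numbers with nonzero real parts
all of the same sign, the elementary symmetric functions satisfy
`(m+1)|σ_{m+1}| ≥ (d-m) c₀ |σ_m|` for `1 ≤ m ≤ d-1`, and `|σ₁| ≥ d c₀`,
where `c₀ = min_j |Re λ_j|`. -/
theorem esymm_growth {d : ℕ} (hd : 0 < d) (l : Fin d → ℂ)
    (hconj : ∃ π : Equiv.Perm (Fin d), ∀ j, l (π j) = (starRingEnd ℂ) (l j))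
    (hsign : (∀ j, 0 < (l j).re) ∨ (∀ j, (l j).re < 0))
    (c₀ : ℝ) (hc₀ : ∀ j, c₀ ≤ |(l j).re|)
    (σ : ℕ → ℂ)
    (hσ : ∀ m, σ m = ∑ t ∈ Finset.univ.powersetCard m, ∏ j ∈ t, l j) :
    (∀ m : ℕ, 1 ≤ m → m ≤ d - 1 →
        (d - m : ℝ) * c₀ * ‖σ m‖ ≤ (m + 1 : ℝ) * ‖σ (m + 1)‖) ∧
      (d : ℝ) * c₀ ≤ ‖σ 1‖ := by
  obtain ⟨π, hπ⟩ := hconj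
  have hs : (univ.val.map l).map (starRingEnd ℂ) = univ.val.map l := by
    conv_rhs => rw [← Multiset.map_univ_val_equiv π, Multiset.map_map]
    rw [Multiset.map_map]
    exact Multiset.map_congr rfl fun j _ => (hπ j).symm
  have hsign' : (∀ z ∈ univ.val.map l, 0 ≤ z.re) ∨ (∀ z ∈ univ.val.map l, z.re ≤ 0) :=
    hsign.imp (fun h => Multiset.forall_mem_map_iff.2 fun j _ => (h j).le)
      (fun h => Multiset.forall_mem_map_iff.2 fun j _ => (h j).le)
  have hgrowth : ∀ m < d, ((d : ℝ) - m) * c₀ * ‖σ m‖ ≤ (m + 1) * ‖σ (m + 1)‖ := fun m hm => by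
    simpa [hσ, ← Finset.esymm_map_val] using
      Multiset.card_sub_mul_norm_esymm_le_of_re_sign hs hsign'
        (Multiset.forall_mem_map_iff.2 fun j _ => hc₀ j) (m := m) (by simpa using hm)
  exact ⟨fun m _ hm => hgrowth m (by omega), by simpa [hσ] using hgrowth 0 hd⟩
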